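/- Let c₁, c₂, c₃ ∈ {-1, 1} and α₁, α₂, α₃ ∈ {0, π}, and define β(α₁,α₂,α₃) = Σ over the three ordered pairs (i,j) ∈ {(1,2),(2,3),(3,1)} of c_i c_j (6 cos(α_i - α_j) + (3/2) cos(α_i + α_j)). If x_i denotes the Boolean value (cos α_i + 1)/2 ∈ {0,1} and the literal ℓ_i equals x_i when c_i = 1 and ¬x_i when c_i = -1, then β = -15/2 when the NAE clause (ℓ₁ ∨ ℓ₂ ∨ ℓ₃) ∧ (¬ℓ₁ ∨ ¬ℓ₂ ∨ ¬ℓ₃) is satisfied and β = 45/2 when it is not. -/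
import Mathlib

open Real

theorem stmt_13 (c₁ c₂ c₃ : ℝ)
    (hc₁ : c₁ = -1 ∨ c₁ = 1) (hc₂ : c₂ = -1 ∨ c₂ = 1) (hc₃ : c₃ = -1 ∨ c₃ = 1)
    (α₁ α₂ α₃ : ℝ)
    (hα₁ : α₁ = 0 ∨ α₁ = π) (hα₂ : α₂ = 0 ∨ α₂ = π) (hα₃ : α₃ = 0 ∨ α₃ = π) :
    let x : ℝ → ℝ := fun a => (Real.cos a + 1) / 2
    let lit : ℝ → ℝ → Prop := fun c a => (c = 1 ∧ x a = 1) ∨ (c = -1 ∧ x a = 0)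
    let β : ℝ :=
      c₁ * c₂ * (6 * Real.cos (α₁ - α₂) + (3 / 2) * Real.cos (α₁ + α₂)) +
      c₂ * c₃ * (6 * Real.cos (α₂ - α₃) + (3 / 2) * Real.cos (α₂ + α₃)) +
      c₃ * c₁ * (6 * Real.cos (α₃ - α₁) + (3 / 2) * Real.cos (α₃ + α₁))
    ((lit c₁ α₁ ∨ lit c₂ α₂ ∨ lit c₃ α₃) ∧
        (¬lit c₁ α₁ ∨ ¬lit c₂ α₂ ∨ ¬lit c₃ α₃) → β = -15 / 2) ∧
    (¬((lit c₁ α₁ ∨ lit c₂ α₂ ∨ lit c₃ α₃) ∧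
        (¬lit c₁ α₁ ∨ ¬lit c₂ α₂ ∨ ¬lit c₃ α₃)) → β = 45 / 2) := by
  have h2 : (π + π : ℝ) = 2 * π := by ring
  rcases hc₁ with rfl | rfl <;> rcases hc₂ with rfl | rfl <;> rcases hc₃ with rfl | rfl <;>
  rcases hα₁ with rfl | rfl <;> rcases hα₂ with rfl | rfl <;> rcases hα₃ with rfl | rfl <;>
  simp only [sub_zero, zero_sub, add_zero, zero_add, sub_self, h2, Real.cos_two_pi,
    Real.cos_neg, Real.cos_pi, Real.cos_zero] <;>
  norm_num [Real.pi_ne_zero]
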